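/- arXiv:2312.08328 — 6 statements merged into one kernel-verified Lean document; each statement's English description precedes it below -/
import Mathlib

section
/- Every k₁-Hausdorff topological space is KC: if every compact subspace of X is Hausdorff in the subspace topology, then every compact subset of X is closed in X. -/
open Set
open scoped Set.Notation

lemma inter_closure_subset_of_isCompact {X : Type*} [TopologicalSpace X] {K L : Set X}
    [T2Space L] (hKL : K ⊆ L) (hK : IsCompact K) : L ∩ closure K ⊆ K := by
  have hK' : IsCompact (L ↓∩ K) := by
    rwa [Subtype.isCompact_iff, Subtype.image_preimage_coe, inter_eq_right.mpr hKL]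
  simpa [inter_eq_right.mpr hKL] using isClosed_preimage_val.mp hK'.isClosed

/-- Every k₁-Hausdorff space is KC: if every compact subspace of `X` is Hausdorff
in the subspace topology, then every compact subset of `X` is closed. -/
theorem k1Hausdorff_is_KC {X : Type*} [TopologicalSpace X]
    (hk1 : ∀ K : Set X, IsCompact K → T2Space K) :
    ∀ K : Set X, IsCompact K → IsClosed K := by
  intro K hK
  refine isClosed_of_closure_subset fun x hx => ?_
  -- `insert x K` is compact, hence Hausdorff, and contains both `x` and `K`.
  have := hk1 _ (hK.insert x)
  exact inter_closure_subset_of_isCompact (subset_insert x K) hK ⟨mem_insert x K, hx⟩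
end

section
/- If K is a compact Hausdorff space, Y is a weakly Hausdorff topological space, and f : K → Y is continuous, then the image f[K], with the subspace topology from Y, is a Hausdorff space. -/
/-!
Write `g : K → f[K]` for the corestriction of `f`. Since `K` is compact Hausdorff, every closed
subset of `K` is compact Hausdorff, so weak Hausdorffness makes `g` a closed map; points of `Y`
are images of the one-point space, so `Y` and hence `f[K]` is T₁. A continuous closed surjection
carries the normality of `K` over to `f[K]`, and a normal T₁ space is Hausdorff.
-/

open Set

/-- Only compact Hausdorff test spaces in the universe `v` are quantified over. -/
def WeaklyHausdorff.{v, u} (Y : Type u) [TopologicalSpace Y] : Prop :=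
  ∀ (L : Type v) [TopologicalSpace L] [CompactSpace L] [T2Space L] (g : L → Y),
    Continuous g → IsClosed (range g)

namespace WeaklyHausdorff

variable {Y : Type*} [TopologicalSpace Y]

theorem t1Space (hY : WeaklyHausdorff.{v} Y) : T1Space Y where
  t1 y := by simpa only [range_const] using hY PUnit (fun _ ↦ y) continuous_const

theorem isClosed_image {K : Type v} [TopologicalSpace K] [T2Space K] (hY : WeaklyHausdorff.{v} Y)
    {f : K → Y} (hf : Continuous f) {S : Set K} (hS : IsCompact S) : IsClosed (f '' S) := by
  have : CompactSpace S := isCompact_iff_compactSpace.mp hS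
  simpa only [range_comp, Subtype.range_coe] using hY S (f ∘ (↑)) (hf.comp continuous_subtype_val)

theorem isClosedMap {K : Type v} [TopologicalSpace K] [CompactSpace K] [T2Space K]
    (hY : WeaklyHausdorff.{v} Y) {f : K → Y} (hf : Continuous f) : IsClosedMap f :=
  fun _ hS ↦ hY.isClosed_image hf hS.isCompact

end WeaklyHausdorff

theorem IsClosedMap.normalSpace_of_surjective {X Z : Type*} [TopologicalSpace X]
    [TopologicalSpace Z] [NormalSpace X] {g : X → Z} (hcont : Continuous g) (hclosed : IsClosedMap g)
    (hsurj : Function.Surjective g) : NormalSpace Z where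
  normal A B hA hB hAB := by
    obtain ⟨U, V, hU, hV, hAU, hBV, hUV⟩ :=
      NormalSpace.normal _ _ (hA.preimage hcont) (hB.preimage hcont) (hAB.preimage g)
    refine ⟨(g '' Uᶜ)ᶜ, (g '' Vᶜ)ᶜ, (hclosed _ hU.isClosed_compl).isOpen_compl,
      (hclosed _ hV.isClosed_compl).isOpen_compl, ?_, ?_, ?_⟩
    · rintro _ hz ⟨x, hxU, rfl⟩
      exact hxU (hAU hz)
    · rintro _ hz ⟨x, hxV, rfl⟩
      exact hxV (hBV hz)
    · rw [disjoint_compl_left_iff_subset, compl_subset_iff_union, ← image_union, ← compl_inter,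
        hUV.symm.inter_eq, compl_empty, image_univ_of_surjective hsurj]

/-- The continuous image of a compact Hausdorff space in a weakly Hausdorff space,
with the subspace topology, is Hausdorff. -/
theorem weaklyHausdorff_image_t2 {Y : Type u} [TopologicalSpace Y]
    (hwH : ∀ (L : Type v) [TopologicalSpace L] [CompactSpace L] [T2Space L]
      (g : L → Y), Continuous g → IsClosed (Set.range g))
    (K : Type v) [TopologicalSpace K] [CompactSpace K] [T2Space K]
    (f : K → Y) (hf : Continuous f) :
    T2Space (Set.range f) := by
  have hY : WeaklyHausdorff.{v} Y := hwH
  have : T1Space Y := hY.t1Space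
  have : NormalSpace (range f) :=
    ((hY.isClosedMap hf).subtype_mk mem_range_self).normalSpace_of_surjective
      (continuous_rangeFactorization_iff.mpr hf) rangeFactorization_surjective
  infer_instance
end

section
/- Every weakly Hausdorff topological space is k₂-Hausdorff: if X is weakly Hausdorff, then for every compact Hausdorff space K, every continuous map f : K → X, and all points k₀, k₁ ∈ K with f(k₀) ≠ f(k₁), there exist open neighborhoods U₀ of k₀ and U₁ of k₁ in K such that f[U₀] ∩ f[U₁] = ∅. -/
/-!
A continuous map `f` from a compact Hausdorff space into a weakly Hausdorff space is closed, and
the points of its target are closed. Hence `comap f (𝓝 y) = 𝓝ˢ (f ⁻¹' {y})`, and two distinct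
points have disjoint closed fibres, which normality of the domain separates. Preimages of the
resulting neighbourhoods of `f k₀` and `f k₁` have disjoint images.
-/

open Filter Topology

universe u v

def IsWeaklyHausdorff (X : Type u) [TopologicalSpace X] : Prop :=
  ∀ (L : Type v) [TopologicalSpace L] [CompactSpace L] [T2Space L]
    (g : L → X), Continuous g → IsClosed (Set.range g)

namespace IsWeaklyHausdorff

variable {X : Type u} [TopologicalSpace X]

theorem t1Space (hX : IsWeaklyHausdorff.{u, v} X) : T1Space X :=
  ⟨fun x ↦ by simpa using hX PUnit.{v + 1} (fun _ ↦ x) continuous_const⟩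

theorem isClosedMap (hX : IsWeaklyHausdorff.{u, v} X) {K : Type v} [TopologicalSpace K]
    [CompactSpace K] [T2Space K] {f : K → X} (hf : Continuous f) : IsClosedMap f := by
  intro S hS
  have : CompactSpace S := isCompact_iff_compactSpace.mp hS.isCompact
  simpa [Set.range_comp] using hX S (f ∘ Subtype.val) (hf.comp continuous_subtype_val)

end IsWeaklyHausdorff

section ClosedMap

variable {K X : Type*} [TopologicalSpace K] [TopologicalSpace X] {f : K → X}

theorem IsClosedMap.disjoint_comap_nhds [NormalSpace K] [T1Space X] (hcl : IsClosedMap f)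
    (hf : Continuous f) {y₀ y₁ : X} (hne : y₀ ≠ y₁) :
    Disjoint (comap f (𝓝 y₀)) (comap f (𝓝 y₁)) := by
  rw [hcl.comap_nhds_eq hf, hcl.comap_nhds_eq hf]
  exact disjoint_nhdsSet_nhdsSet (isClosed_singleton.preimage hf)
    (isClosed_singleton.preimage hf) ((Set.disjoint_singleton.mpr hne).preimage f)

theorem exists_isOpen_image_inter_image_eq_empty_of_disjoint_comap_nhds (hf : Continuous f)
    {k₀ k₁ : K} (hdisj : Disjoint (comap f (𝓝 (f k₀))) (comap f (𝓝 (f k₁)))) :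
    ∃ U₀ U₁ : Set K, IsOpen U₀ ∧ IsOpen U₁ ∧ k₀ ∈ U₀ ∧ k₁ ∈ U₁ ∧ f '' U₀ ∩ f '' U₁ = ∅ := by
  obtain ⟨O₀, ⟨hO₀, hO₀open⟩, O₁, ⟨hO₁, hO₁open⟩, hO⟩ :=
    ((nhds_basis_opens (f k₀)).comap f).disjoint_iff ((nhds_basis_opens (f k₁)).comap f) |>.mp
      hdisj
  refine ⟨f ⁻¹' O₀, f ⁻¹' O₁, hO₀open.preimage hf, hO₁open.preimage hf, hO₀, hO₁, ?_⟩
  rw [Set.eq_empty_iff_forall_notMem]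
  rintro _ ⟨⟨a, ha₀, rfl⟩, b, hb₁, hba⟩
  exact hO.le_bot ⟨ha₀, (hba ▸ hb₁ : f a ∈ O₁)⟩

end ClosedMap

/-- Every weakly Hausdorff space is k₂-Hausdorff. -/
theorem weaklyHausdorff_is_k2Hausdorff {X : Type u} [TopologicalSpace X]
    (hwH : ∀ (L : Type v) [TopologicalSpace L] [CompactSpace L] [T2Space L]
      (g : L → X), Continuous g → IsClosed (Set.range g)) :
    ∀ (K : Type v) [TopologicalSpace K] [CompactSpace K] [T2Space K]
      (f : K → X), Continuous f → ∀ k₀ k₁ : K, f k₀ ≠ f k₁ →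
        ∃ U₀ U₁ : Set K, IsOpen U₀ ∧ IsOpen U₁ ∧ k₀ ∈ U₀ ∧ k₁ ∈ U₁ ∧
          f '' U₀ ∩ f '' U₁ = ∅ := by
  intro K _ _ _ f hf k₀ k₁ hne
  have hX : IsWeaklyHausdorff.{u, v} X := hwH
  have : T1Space X := hX.t1Space
  exact exists_isOpen_image_inter_image_eq_empty_of_disjoint_comap_nhds hf
    ((hX.isClosedMap hf).disjoint_comap_nhds hf hne)
end

section
/- Every k₂-Hausdorff topological space is US: if X is k₂-Hausdorff and a sequence (xₙ) in X converges to both l₀ and l₁, then l₀ = l₁. -/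
open OnePoint Filter

/-- Every k₂-Hausdorff space is US: if `X` is k₂-Hausdorff and a sequence
converges to both `l₀` and `l₁`, then `l₀ = l₁`. -/
theorem k2Hausdorff_is_US {X : Type u} [TopologicalSpace X]
    (hk2 : ∀ (K : Type v) [TopologicalSpace K] [CompactSpace K] [T2Space K]
      (f : K → X), Continuous f → ∀ k₀ k₁ : K, f k₀ ≠ f k₁ →
        ∃ U₀ U₁ : Set K, IsOpen U₀ ∧ IsOpen U₁ ∧ k₀ ∈ U₀ ∧ k₁ ∈ U₁ ∧
          f '' U₀ ∩ f '' U₁ = ∅) :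
    ∀ (x : ℕ → X) (l₀ l₁ : X),
      Filter.Tendsto x Filter.atTop (nhds l₀) →
      Filter.Tendsto x Filter.atTop (nhds l₁) → l₀ = l₁ := by
  intro x l₀ l₁ h₀ h₁
  by_contra hne
  set g₀ : OnePoint ℕ → X := fun p => OnePoint.rec l₀ x p with hg₀
  set g₁ : OnePoint ℕ → X := fun p => OnePoint.rec l₁ x p with hg₁
  have hc₀ : Continuous g₀ := (continuous_iff_from_nat g₀).mpr h₀
  have hc₁ : Continuous g₁ := (continuous_iff_from_nat g₁).mpr h₁
  set f : ULift.{v} (OnePoint ℕ ⊕ OnePoint ℕ) → X :=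
    fun p => Sum.elim g₀ g₁ p.down with hf
  have hcf : Continuous f := (hc₀.sumElim hc₁).comp continuous_uliftDown
  obtain ⟨U₀, U₁, hU₀, hU₁, hm₀, hm₁, hdisj⟩ :=
    hk2 _ f hcf ⟨Sum.inl ∞⟩ ⟨Sum.inr ∞⟩ hne
  -- eventually n is in both
  have h0 : ∀ᶠ n : ℕ in atTop, (⟨Sum.inl (n : OnePoint ℕ)⟩ : ULift.{v} (OnePoint ℕ ⊕ OnePoint ℕ)) ∈ U₀ := by
    have : Tendsto (fun n : ℕ => (⟨Sum.inl (n : OnePoint ℕ)⟩ : ULift.{v} (OnePoint ℕ ⊕ OnePoint ℕ)))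
        atTop (nhds ⟨Sum.inl ∞⟩) := by
      have h1 : Tendsto (fun n : ℕ => ((n : OnePoint ℕ))) atTop (nhds ∞) := by
        exact
          (OnePoint.tendsto_coe_infty (X := ℕ)).comp
            (by rw [Filter.coclosedCompact_eq_cocompact, cocompact_eq_cofinite, Nat.cofinite_eq_atTop]; exact tendsto_id (α := ℕ) (x := atTop))
      exact (continuous_uliftUp.tendsto _).comp
        ((continuous_inl.tendsto _).comp h1)
    exact this.eventually (hU₀.mem_nhds hm₀)
  have h1 : ∀ᶠ n : ℕ in atTop, (⟨Sum.inr (n : OnePoint ℕ)⟩ : ULift.{v} (OnePoint ℕ ⊕ OnePoint ℕ)) ∈ U₁ := by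
    have : Tendsto (fun n : ℕ => (⟨Sum.inr (n : OnePoint ℕ)⟩ : ULift.{v} (OnePoint ℕ ⊕ OnePoint ℕ)))
        atTop (nhds ⟨Sum.inr ∞⟩) := by
      have h1 : Tendsto (fun n : ℕ => ((n : OnePoint ℕ))) atTop (nhds ∞) := by
        exact
          (OnePoint.tendsto_coe_infty (X := ℕ)).comp
            (by rw [Filter.coclosedCompact_eq_cocompact, cocompact_eq_cofinite, Nat.cofinite_eq_atTop]; exact tendsto_id (α := ℕ) (x := atTop))
      exact (continuous_uliftUp.tendsto _).comp
        ((continuous_inr.tendsto _).comp h1)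
    exact this.eventually (hU₁.mem_nhds hm₁)
  obtain ⟨n, hn₀, hn₁⟩ := (h0.and h1).exists
  have : x n ∈ f '' U₀ ∩ f '' U₁ :=
    ⟨⟨_, hn₀, rfl⟩, ⟨_, hn₁, rfl⟩⟩
  rw [hdisj] at this
  exact this
end

section
/- If X is a KC topological space, then its one-point compactification X⁺ = X ∪ {∞} is k₂-Hausdorff. -/
open Set OnePoint

lemma aux_onePoint_KC {X : Type u} [TopologicalSpace X]
    (hKC : ∀ K : Set X, IsCompact K → IsClosed K)
    {K : Type v} [TopologicalSpace K] [CompactSpace K] [T2Space K]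
    {f : K → OnePoint X} (hf : Continuous f) (k₀ k₁ : K)
    (hne : f k₀ ≠ f k₁) (h1 : f k₁ ≠ ∞) :
    ∃ U₀ U₁ : Set K, IsOpen U₀ ∧ IsOpen U₁ ∧ k₀ ∈ U₀ ∧ k₁ ∈ U₁ ∧
      f '' U₀ ∩ f '' U₁ = ∅ := by
  haveI : T1Space X := ⟨fun x => hKC {x} isCompact_singleton⟩
  -- O is the complement of {f k₀, ∞}
  set O : Set (OnePoint X) := {f k₀, ∞}ᶜ with hO
  have hOopen : IsOpen O := by
    have : IsClosed ({f k₀, ∞} : Set (OnePoint X)) := (Set.toFinite _).isClosed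
    exact this.isOpen_compl
  have hk₁O : k₁ ∈ f ⁻¹' O := by
    simp only [hO, Set.mem_preimage, Set.mem_compl_iff, Set.mem_insert_iff,
      Set.mem_singleton_iff]
    push_neg
    exact ⟨fun h => hne h.symm, h1⟩
  obtain ⟨Q, hQc, hk₁int, hQsub⟩ :=
    exists_compact_subset (hf.isOpen_preimage O hOopen) hk₁O
  -- f '' Q avoids ∞, so it is the image of a set in X
  have hsub : f '' Q ⊆ Set.range ((↑) : X → OnePoint X) := by
    intro y hy
    obtain ⟨k, hk, rfl⟩ := hy
    have : f k ∈ O := hQsub hk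
    rcases hx : f k with _ | x
    · rw [hx] at this
      exact absurd (Set.mem_insert_of_mem _ rfl) this
    · exact ⟨x, rfl⟩
  set s : Set X := ((↑) : X → OnePoint X) ⁻¹' (f '' Q) with hs
  have himg : ((↑) : X → OnePoint X) '' s = f '' Q :=
    Set.image_preimage_eq_of_subset hsub
  have hscompact : IsCompact s := by
    rw [isOpenEmbedding_coe.isCompact_iff, himg]
    exact hQc.image hf
  have hclosed : IsClosed (f '' Q) := by
    rw [← himg]
    exact isClosed_image_coe.2 ⟨hKC s hscompact, hscompact⟩
  refine ⟨f ⁻¹' (f '' Q)ᶜ, interior Q,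
    hclosed.isOpen_compl.preimage hf, isOpen_interior, ?_, hk₁int, ?_⟩
  · intro h
    obtain ⟨k, hk, hfk⟩ := h
    have : f k ∈ O := hQsub hk
    rw [hfk] at this
    simp [hO] at this
  · apply Set.eq_empty_of_forall_notMem
    rintro y ⟨⟨a, ha, rfl⟩, ⟨b, hb, hfb⟩⟩
    exact ha (hfb ▸ Set.mem_image_of_mem f (interior_subset hb))

/-- The one-point compactification of a KC space is k₂-Hausdorff. -/
theorem onePoint_of_KC_is_k2Hausdorff {X : Type u} [TopologicalSpace X]
    (hKC : ∀ K : Set X, IsCompact K → IsClosed K) :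
    ∀ (K : Type v) [TopologicalSpace K] [CompactSpace K] [T2Space K]
      (f : K → OnePoint X), Continuous f → ∀ k₀ k₁ : K, f k₀ ≠ f k₁ →
        ∃ U₀ U₁ : Set K, IsOpen U₀ ∧ IsOpen U₁ ∧ k₀ ∈ U₀ ∧ k₁ ∈ U₁ ∧
          f '' U₀ ∩ f '' U₁ = ∅ := by
  intro K _ _ _ f hf k₀ k₁ hne
  by_cases h1 : f k₁ = ∞
  · have h0 : f k₀ ≠ ∞ := fun h => hne (h.trans h1.symm)
    obtain ⟨U₁, U₀, hU₁, hU₀, hk₁, hk₀, hdisj⟩ :=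
      aux_onePoint_KC hKC hf k₁ k₀ (Ne.symm hne) h0
    exact ⟨U₀, U₁, hU₀, hU₁, hk₀, hk₁, by rw [Set.inter_comm]; exact hdisj⟩
  · exact aux_onePoint_KC hKC hf k₀ k₁ hne h1
end

section
/- If X is a nonempty topological space in which no point has a compact neighborhood, then the one-point compactification X⁺ = X ∪ {∞} is not semi-Hausdorff; indeed, the only regular open subset of X⁺ containing ∞ is X⁺ itself. -/
/-! An open neighbourhood of `∞` in `X⁺` misses only a compact subset of `X`, and compact subsets
of a nowhere locally compact space have empty interior. So every such neighbourhood is dense, and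
a dense regular open set is the whole space. -/

open Set Topology

theorem interior_eq_empty_of_isCompact {X : Type*} [TopologicalSpace X]
    (hnlc : ∀ (x : X) (K : Set X), K ∈ 𝓝 x → ¬ IsCompact K) {K : Set X} (hK : IsCompact K) :
    interior K = ∅ :=
  eq_empty_of_forall_notMem fun x hx => hnlc x K (mem_interior_iff_mem_nhds.mp hx) hK

namespace OnePoint

variable {X : Type*} [TopologicalSpace X]

theorem dense_of_isOpen_of_infty_mem (hnlc : ∀ (x : X) (K : Set X), K ∈ 𝓝 x → ¬ IsCompact K)
    {U : Set (OnePoint X)} (hU : IsOpen U) (hinf : ∞ ∈ U) : Dense U := by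
  suffices interior Uᶜ = ∅ by simpa using interior_eq_empty_iff_dense_compl.mp this
  have hK : IsCompact ((↑) ⁻¹' Uᶜ : Set X) := ((isOpen_iff_of_mem' hinf).mp hU).1
  have hcoe : ((↑) ⁻¹' interior Uᶜ : Set X) = ∅ :=
    subset_empty_iff.mp <| (preimage_interior_subset_interior_preimage continuous_coe).trans
      (interior_eq_empty_of_isCompact hnlc hK).subset
  refine eq_empty_of_forall_notMem fun z hz => ?_
  induction z using OnePoint.rec with
  | infty => exact interior_subset hz hinf
  | coe x => exact (hcoe ▸ hz : x ∈ (∅ : Set X))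

theorem eq_univ_of_isRegularOpen_of_infty_mem
    (hnlc : ∀ (x : X) (K : Set X), K ∈ 𝓝 x → ¬ IsCompact K) {U : Set (OnePoint X)}
    (hU : IsOpen U) (hreg : U = interior (closure U)) (hinf : ∞ ∈ U) : U = univ := by
  rw [hreg, (dense_of_isOpen_of_infty_mem hnlc hU hinf).closure_eq, interior_univ]

end OnePoint

/-- The one-point compactification of a nonempty nowhere locally compact space is
not semi-Hausdorff; indeed, the only regular open subset of `X⁺` containing `∞`
is `X⁺` itself. -/
theorem onePoint_of_nowhereLocallyCompact_not_semiHausdorff {X : Type*}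
    [TopologicalSpace X] [Nonempty X]
    (hnlc : ∀ (x : X) (K : Set X), K ∈ nhds x → ¬ IsCompact K) :
    (∀ U : Set (OnePoint X), IsOpen U → U = interior (closure U) →
      OnePoint.infty ∈ U → U = Set.univ) ∧
    ¬ ∀ x y : OnePoint X, x ≠ y →
      ∃ U : Set (OnePoint X), IsOpen U ∧ U = interior (closure U) ∧
        x ∈ U ∧ y ∉ U := by
  have huniv := fun U => OnePoint.eq_univ_of_isRegularOpen_of_infty_mem hnlc (U := U)
  refine ⟨huniv, fun hsep => ?_⟩
  obtain ⟨x⟩ := ‹Nonempty X›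
  obtain ⟨U, hU, hreg, hinf, hx⟩ := hsep OnePoint.infty x (OnePoint.infty_ne_coe x)
  exact hx (huniv U hU hreg hinf ▸ mem_univ _)
end
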